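/- arXiv:1605.05114 — 7 statements merged into one kernel-verified Lean document; each statement's English description precedes it below -/
import Mathlib

section
/- The dimension of a simple game G = (P, W) with W ≠ 2^P and ∅ ∉ W is at most the number of maximal losing coalitions of G: G can be written as the intersection of |L_max| weighted games. -/
def IsWeighted {α : Type*} [Fintype α] (W : Finset α → Prop) : Prop :=
  ∃ (w : α → ℝ) (q : ℝ), (∀ i, 0 ≤ w i) ∧ 0 < q ∧ ∀ X : Finset α, W X ↔ q ≤ ∑ i ∈ X, w i

/-!
Each maximal losing coalition `L` defines the weighted game "not contained in `L`" (weight one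
outside `L`, quota one). A winning coalition lies in no losing one by monotonicity, and a losing
coalition extends to a maximal losing one, so `W` is the intersection of these games.
-/

namespace Finset

theorem isWeighted_not_subset {α : Type*} [Fintype α] (L : Finset α) :
    IsWeighted fun X : Finset α => ¬ X ⊆ L := by
  classical
  refine ⟨fun i => if i ∉ L then 1 else 0, 1, fun i => by positivity, one_pos, fun X => ?_⟩
  show ¬ X ⊆ L ↔ _
  rw [sum_boole, ← sdiff_eq_filter, Nat.one_le_cast, Nat.one_le_iff_ne_zero, ← pos_iff_ne_zero,
    card_pos, sdiff_nonempty]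

theorem exists_maximal_losing_superset {α : Type*} [Finite α] {W : Finset α → Prop} {X : Finset α}
    (hX : ¬ W X) : ∃ L, X ⊆ L ∧ ¬ W L ∧ ∀ Y, L ⊂ Y → W Y := by
  obtain ⟨L, hXL, hL⟩ := Finite.exists_le_maximal (p := fun Y : Finset α => ¬ W Y) hX
  exact ⟨L, hXL, hL.prop, fun Y hLY => not_not.mp fun hY => hLY.not_ge (hL.2 hY hLY.le)⟩

end Finset

theorem dimension_le_card_maximal_losing_general {α : Type*} [Fintype α]
    (W : Finset α → Prop)
    (hmono : ∀ X Y : Finset α, X ⊆ Y → W X → W Y) :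
    ∃ V : {X : Finset α // ¬ W X ∧ ∀ Y : Finset α, X ⊂ Y → W Y} → Finset α → Prop,
      (∀ l, IsWeighted (V l)) ∧ ∀ X : Finset α, W X ↔ ∀ l, V l X := by
  refine ⟨fun l X => ¬ X ⊆ l.1, fun l => Finset.isWeighted_not_subset l.1, fun X => ⟨?_, ?_⟩⟩
  · exact fun hX l hXl => l.2.1 (hmono X l.1 hXl hX)
  · intro h
    by_contra hX
    obtain ⟨L, hXL, hL⟩ := Finset.exists_maximal_losing_superset hX
    exact h ⟨L, hL⟩ hXL

/-- The dimension of a simple game `G = (P, W)` with `W ≠ 2^P` and `∅ ∉ W` is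
at most the number of maximal losing coalitions: `G` can be written as the
intersection of a family of weighted games indexed by the maximal losing
coalitions. -/
theorem dimension_le_card_maximal_losing {α : Type*} [Fintype α]
    (W : Finset α → Prop)
    (hmono : ∀ X Y : Finset α, X ⊆ Y → W X → W Y)
    (hproper : ∃ X : Finset α, ¬ W X)
    (hempty : ¬ W (∅ : Finset α)) :
    ∃ V : {X : Finset α // ¬ W X ∧ ∀ Y : Finset α, X ⊂ Y → W Y} → Finset α → Prop,
      (∀ l, IsWeighted (V l)) ∧ ∀ X : Finset α, W X ↔ ∀ l, V l X :=
  dimension_le_card_maximal_losing_general W hmono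
end

section
/- (Kurz–Napel criterion) Let G = (P, W) be a simple game and S = {Y_1,...,Y_k} a set of losing coalitions such that for each pair i ≠ j there is no weighted simple game in which every coalition of W is winning and both Y_i and Y_j are losing. Then G cannot be written as the intersection of fewer than k weighted games; in particular dim(G) ≥ k. -/
theorem Fintype.card_le_of_leftTotal_of_leftUnique {ι κ : Type*} [Fintype ι] [Fintype κ]
    {R : ι → κ → Prop} (htotal : Relator.LeftTotal R) (hunique : Relator.LeftUnique R) :
    Fintype.card ι ≤ Fintype.card κ := by
  choose f hf using htotal
  exact Fintype.card_le_of_injective f fun i j hij => hunique (hf i) (hij ▸ hf j)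

theorem kurz_napel_general {α : Type*} [Fintype α]
    (W : Finset α → Prop)
    (k : ℕ) (Y : Fin k → Finset α)
    (hlose : ∀ i, ¬ W (Y i))
    (hincomp : ∀ i j : Fin k, i ≠ j →
      ¬ ∃ V : Finset α → Prop, IsWeighted V ∧ (∀ X, W X → V X) ∧ ¬ V (Y i) ∧ ¬ V (Y j))
    (d : ℕ) (V : Fin d → Finset α → Prop)
    (hVw : ∀ t, IsWeighted (V t))
    (hrep : ∀ X : Finset α, W X ↔ ∀ t, V t X) :
    k ≤ d := by
  have htotal : Relator.LeftTotal fun i t => ¬ V t (Y i) := fun i => by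
    simpa only [not_forall] using mt (hrep (Y i)).mpr (hlose i)
  have hunique : Relator.LeftUnique fun i t => ¬ V t (Y i) := fun i j t hi hj => by
    by_contra hne
    exact hincomp i j hne ⟨V t, hVw t, fun X hX => (hrep X).mp hX t, hi, hj⟩
  simpa using Fintype.card_le_of_leftTotal_of_leftUnique htotal hunique

/-- Kurz–Napel criterion: if `Y₁,…,Y_k` are pairwise distinct losing coalitions
of `G` such that for each pair `i ≠ j` there is no weighted game in which every
winning coalition of `G` wins while both `Yᵢ` and `Yⱼ` lose, then `G` cannot be
an intersection of fewer than `k` weighted games. -/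
theorem kurz_napel {α : Type*} [Fintype α]
    (W : Finset α → Prop)
    (hmono : ∀ X Y : Finset α, X ⊆ Y → W X → W Y)
    (k : ℕ) (Y : Fin k → Finset α) (hinj : Function.Injective Y)
    (hlose : ∀ i, ¬ W (Y i))
    (hincomp : ∀ i j : Fin k, i ≠ j →
      ¬ ∃ V : Finset α → Prop, IsWeighted V ∧ (∀ X, W X → V X) ∧ ¬ V (Y i) ∧ ¬ V (Y j))
    (d : ℕ) (V : Fin d → Finset α → Prop)
    (hVw : ∀ t, IsWeighted (V t))
    (hrep : ∀ X : Finset α, W X ↔ ∀ t, V t X) :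
    k ≤ d :=
  kurz_napel_general W k Y hlose hincomp d V hVw hrep
end

section
/- If (X_1, X_2; Y_i, Y_j) is a trading transform with X_1, X_2 winning coalitions of a simple game G, then there is no weighted simple game in which all winning coalitions of G are winning but Y_i and Y_j are both losing. -/
def IsTradingTransform {α : Type*} [DecidableEq α] (X₁ X₂ Y₁ Y₂ : Finset α) : Prop :=
  ∀ a : α, ((if a ∈ X₁ then 1 else 0) + (if a ∈ X₂ then 1 else 0) : ℕ) =
    (if a ∈ Y₁ then 1 else 0) + (if a ∈ Y₂ then 1 else 0)

section TradingTransform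

variable {α M : Type*} [Fintype α] [DecidableEq α] [AddCommMonoid M]

theorem Finset.sum_eq_sum_univ_indicator_smul (X : Finset α) (f : α → M) :
    ∑ i ∈ X, f i = ∑ a, (if a ∈ X then 1 else 0 : ℕ) • f a := by
  simp only [ite_smul, one_smul, zero_smul, Finset.sum_ite_mem, Finset.univ_inter]

theorem IsTradingTransform.sum_add_sum_eq {X₁ X₂ Y₁ Y₂ : Finset α}
    (htrade : IsTradingTransform X₁ X₂ Y₁ Y₂) (f : α → M) :
    ∑ i ∈ X₁, f i + ∑ i ∈ X₂, f i = ∑ i ∈ Y₁, f i + ∑ i ∈ Y₂, f i := by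
  simp only [Finset.sum_eq_sum_univ_indicator_smul _ f, ← Finset.sum_add_distrib, ← add_smul]
  exact Finset.sum_congr rfl fun a _ => by rw [htrade a]

theorem IsWeighted.left_or_right_of_isTradingTransform {V : Finset α → Prop} (hV : IsWeighted V)
    {X₁ X₂ Y₁ Y₂ : Finset α} (htrade : IsTradingTransform X₁ X₂ Y₁ Y₂) (hX₁ : V X₁)
    (hX₂ : V X₂) : V Y₁ ∨ V Y₂ := by
  obtain ⟨w, q, -, -, hVq⟩ := hV
  simp only [hVq] at hX₁ hX₂ ⊢
  by_contra! hY
  linarith [htrade.sum_add_sum_eq w]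

end TradingTransform

theorem trading_transform_incompatible_general {α : Type*} [Fintype α] [DecidableEq α]
    (W : Finset α → Prop)
    (X₁ X₂ Y₁ Y₂ : Finset α)
    (htrade : ∀ a : α,
      ((if a ∈ X₁ then 1 else 0) + (if a ∈ X₂ then 1 else 0) : ℕ) =
      (if a ∈ Y₁ then 1 else 0) + (if a ∈ Y₂ then 1 else 0))
    (hX₁ : W X₁) (hX₂ : W X₂) :
    ¬ ∃ V : Finset α → Prop, IsWeighted V ∧ (∀ X, W X → V X) ∧ ¬ V Y₁ ∧ ¬ V Y₂ := by
  rintro ⟨V, hV, hWV, hY₁, hY₂⟩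
  exact (hV.left_or_right_of_isTradingTransform htrade (hWV _ hX₁) (hWV _ hX₂)).elim hY₁ hY₂

/-- If `(X₁, X₂; Y₁, Y₂)` is a trading transform with `X₁, X₂` winning in `G`,
then there is no weighted simple game in which all winning coalitions of `G`
are winning but `Y₁` and `Y₂` are both losing. -/
theorem trading_transform_incompatible {α : Type*} [Fintype α] [DecidableEq α]
    (W : Finset α → Prop)
    (hmono : ∀ X Y : Finset α, X ⊆ Y → W X → W Y)
    (X₁ X₂ Y₁ Y₂ : Finset α)
    (htrade : ∀ a : α,
      ((if a ∈ X₁ then 1 else 0) + (if a ∈ X₂ then 1 else 0) : ℕ) =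
      (if a ∈ Y₁ then 1 else 0) + (if a ∈ Y₂ then 1 else 0))
    (hX₁ : W X₁) (hX₂ : W X₂) :
    ¬ ∃ V : Finset α → Prop, IsWeighted V ∧ (∀ X, W X → V X) ∧ ¬ V Y₁ ∧ ¬ V Y₂ :=
  trading_transform_incompatible_general W X₁ X₂ Y₁ Y₂ htrade hX₁ hX₂
end

section
/- Let d ≥ 2, P = P_0 ∪ P_1 with |P_0| = d, |P_1| = 2d, and let H be the simple game on P in which a coalition X is winning iff |X ∩ P_0| ≥ 2 or |X| ≥ 4. Then H cannot be represented as the intersection of fewer than d weighted simple games, i.e., dim(H) ≥ d. -/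
theorem IsWeighted.or_of_union_eq_of_inter_eq {α : Type*} [Fintype α] [DecidableEq α]
    {V : Finset α → Prop} (hV : IsWeighted V) {A B X Y : Finset α} (hA : V A) (hB : V B)
    (hU : A ∪ B = X ∪ Y) (hI : A ∩ B = X ∩ Y) : V X ∨ V Y := by
  obtain ⟨w, q, -, -, hwq⟩ := hV
  by_contra! h
  simp only [hwq, not_le] at hA hB h
  have hAB := Finset.sum_union_inter (s₁ := A) (s₂ := B) (f := w)
  have hXY := Finset.sum_union_inter (s₁ := X) (s₂ := Y) (f := w)
  rw [hU, hI] at hAB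
  linarith

theorem card_le_of_pairwise_trades {α ι κ : Type*} [Fintype α] [DecidableEq α] [Fintype ι]
    [Fintype κ] {V : κ → Finset α → Prop} (hV : ∀ i, IsWeighted (V i)) (L : ι → Finset α)
    (hL : ∀ k, ∃ i, ¬ V i (L k))
    (htrade : ∀ k j, k ≠ j → ∃ A B, (∀ i, V i A) ∧ (∀ i, V i B) ∧
      A ∪ B = L k ∪ L j ∧ A ∩ B = L k ∩ L j) :
    Fintype.card ι ≤ Fintype.card κ := by
  choose f hf using hL
  refine Fintype.card_le_of_injective f fun k j hkj => ?_
  by_contra hne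
  obtain ⟨A, B, hA, hB, hU, hI⟩ := htrade k j hne
  rcases (hV (f k)).or_of_union_eq_of_inter_eq (hA _) (hB _) hU hI with h | h
  · exact hf k h
  · exact hf j (hkj ▸ h)

theorem exists_pairwise_trades_of_two_mul_card_le {α : Type*} [DecidableEq α]
    {P₀ P₁ : Finset α} (hdisj : Disjoint P₀ P₁) (hcard : 2 * P₀.card ≤ P₁.card) :
    ∃ L : P₀ → Finset α, (∀ a, (L a ∩ P₀).card ≤ 1 ∧ (L a).card ≤ 3) ∧
      ∀ a a', a ≠ a' → ∃ A B : Finset α, 2 ≤ (A ∩ P₀).card ∧ 4 ≤ B.card ∧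
        A ∪ B = L a ∪ L a' ∧ A ∩ B = L a ∩ L a' := by
  obtain ⟨e⟩ := Function.Embedding.nonempty_of_card_le (α := P₀ ⊕ P₀) (β := P₁)
    (by simpa [two_mul] using hcard)
  set b : P₀ → α := fun a => e (.inl a)
  set c : P₀ → α := fun a => e (.inr a)
  have hb : ∀ a, b a ∉ P₀ := fun a => Finset.disjoint_right.1 hdisj (e _).2
  have hc : ∀ a, c a ∉ P₀ := fun a => Finset.disjoint_right.1 hdisj (e _).2
  have hab : ∀ a a' : P₀, (a : α) ≠ b a' := fun a a' h => hb a' (h ▸ a.2)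
  have hac : ∀ a a' : P₀, (a : α) ≠ c a' := fun a a' h => hc a' (h ▸ a.2)
  have hbc : ∀ a a', b a ≠ c a' := fun a a' h => by simpa using e.injective (Subtype.ext h)
  have hbb : ∀ a a', b a = b a' ↔ a = a' := fun a a' => by simp [b, Subtype.ext_iff.symm]
  have hcc : ∀ a a', c a = c a' ↔ a = a' := fun a a' => by simp [c, Subtype.ext_iff.symm]
  refine ⟨fun a => {(a : α), b a, c a}, fun a => ⟨?_, Finset.card_le_three⟩, fun a a' hne => ?_⟩
  · have : ({(a : α), b a, c a} : Finset α) ∩ P₀ = {(a : α)} := by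
      ext x
      simp only [Finset.mem_inter, Finset.mem_insert, Finset.mem_singleton]
      constructor
      · rintro ⟨rfl | rfl | rfl, hx⟩ <;> simp_all
      · rintro rfl
        exact ⟨Or.inl rfl, a.2⟩
    rw [this, Finset.card_singleton]
  · have hne' : (a : α) ≠ a' := Subtype.coe_injective.ne hne
    have hdisjL : Disjoint ({(a : α), b a, c a} : Finset α) {(a' : α), b a', c a'} := by
      simp [Finset.disjoint_left, hne', hbb, hcc, hbc, (hbc _ _).symm, hne, hab, hac,
        (hab _ _).symm, (hac _ _).symm]
    refine ⟨{(a : α), (a' : α)}, {b a, c a, b a', c a'}, ?_, ?_, ?_, ?_⟩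
    · rw [Finset.inter_eq_left.2 (by simp [Finset.insert_subset_iff]), Finset.card_pair hne']
    · rw [Finset.card_insert_of_notMem, Finset.card_insert_of_notMem, Finset.card_pair] <;>
        simp [hbb, hcc, hbc, (hbc _ _).symm, hne]
    · ext x
      simp only [Finset.mem_union, Finset.mem_insert, Finset.mem_singleton]
      tauto
    · rw [Finset.disjoint_iff_inter_eq_empty.1 hdisjL, ← Finset.disjoint_iff_inter_eq_empty]
      simp [Finset.disjoint_left, hab, hac]

theorem hexists24_dim_ge_general {α : Type*} [Fintype α] [DecidableEq α]
    (d : ℕ)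
    (P₀ P₁ : Finset α) (hdisj : Disjoint P₀ P₁)
    (h₀ : P₀.card = d) (h₁ : P₁.card = 2 * d)
    (W : Finset α → Prop)
    (hW : ∀ X : Finset α, W X ↔ 2 ≤ (X ∩ P₀).card ∨ 4 ≤ X.card)
    (n : ℕ) (V : Fin n → Finset α → Prop)
    (hVw : ∀ i, IsWeighted (V i))
    (hrep : ∀ X : Finset α, W X ↔ ∀ i, V i X) :
    d ≤ n := by
  obtain ⟨L, hL, htrade⟩ := exists_pairwise_trades_of_two_mul_card_le hdisj (by omega)
  have hlose : ∀ a, ∃ i, ¬ V i (L a) := fun a => by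
    by_contra! h
    rcases (hW _).1 ((hrep _).2 h) with h' | h' <;> linarith [hL a]
  have hwin : ∀ a a', a ≠ a' → ∃ A B, (∀ i, V i A) ∧ (∀ i, V i B) ∧
      A ∪ B = L a ∪ L a' ∧ A ∩ B = L a ∩ L a' := fun a a' hne => by
    obtain ⟨A, B, hA, hB, hU, hI⟩ := htrade a a' hne
    exact ⟨A, B, (hrep A).1 ((hW A).2 (.inl hA)), (hrep B).1 ((hW B).2 (.inr hB)), hU, hI⟩
  simpa [h₀] using card_le_of_pairwise_trades hVw L hlose hwin

/-- Let `d ≥ 2`, `P = P₀ ∪ P₁` with `|P₀| = d`, `|P₁| = 2d`, and let `H` be the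
game where `X` wins iff `|X ∩ P₀| ≥ 2` or `|X| ≥ 4` (the disjunctive
hierarchical game `H_∃(P,(2,4))`). Then `H` is not an intersection of fewer
than `d` weighted games, i.e. `dim H ≥ d`. -/
theorem hexists24_dim_ge {α : Type*} [Fintype α] [DecidableEq α]
    (d : ℕ) (hd : 2 ≤ d)
    (P₀ P₁ : Finset α) (hdisj : Disjoint P₀ P₁) (hcover : P₀ ∪ P₁ = Finset.univ)
    (h₀ : P₀.card = d) (h₁ : P₁.card = 2 * d)
    (W : Finset α → Prop)
    (hW : ∀ X : Finset α, W X ↔ 2 ≤ (X ∩ P₀).card ∨ 4 ≤ X.card)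
    (n : ℕ) (V : Fin n → Finset α → Prop)
    (hVw : ∀ i, IsWeighted (V i))
    (hrep : ∀ X : Finset α, W X ↔ ∀ i, V i X) :
    d ≤ n :=
  hexists24_dim_ge_general d P₀ P₁ hdisj h₀ h₁ W hW n V hVw hrep
end

section
/- Let k ≥ 2 and m ≥ 2, P = P_0 ∪ P_1 ∪ ... ∪ P_{m−1} with |P_0| = k and |P_i| = 2k for 1 ≤ i ≤ m−1, and let H be the game in which X is winning iff |X ∩ (P_0 ∪ ... ∪ P_i)| ≥ 2(i+1) for some i ∈ {0,...,m−1}. Then dim(H) ≥ k^{m−1}. -/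
/-!
Pick one player of `P₀` and a disjoint pair in each `Pᵢ`, `i ≥ 1`, each indexed by `Fin k`.
For `v : Fin m → Fin k` the union `A_v` of the chosen blocks meets `P₀ ∪ … ∪ Pᵢ` in exactly
`2i + 1` players, so it loses. If `v` and `u` differ at levels `i₁ < i₂`, then a player `b` of
`A_u ∩ P_{i₁}` completes `A_v ∩ (P₀ ∪ … ∪ P_{i₁})` to a winning coalition, while the rest of
`A_u` together with `A_v`'s players above level `i₁` wins at level `i₂`. The two winners are a
trade of `A_v` and `A_u`, so no weighted game containing `H` rejects both. The `k^(m-1)` vectors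
of the parity-check code `f ↦ (-∑ f, f)` pairwise differ in two coordinates, hence need pairwise
distinct weighted games to reject them.
-/

open Finset Function

theorem IsWeighted.or_of_union_subset_of_inter_subset {α : Type*} [Fintype α] [DecidableEq α]
    {W : Finset α → Prop} (hW : IsWeighted W) {A B C D : Finset α} (hC : W C) (hD : W D)
    (hunion : C ∪ D ⊆ A ∪ B) (hinter : C ∩ D ⊆ A ∩ B) : W A ∨ W B := by
  obtain ⟨w, q, hw, -, hWq⟩ := hW
  by_contra! h
  simp only [hWq, not_le] at h hC hD
  have hmono {s t : Finset α} (hst : s ⊆ t) : ∑ x ∈ s, w x ≤ ∑ x ∈ t, w x :=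
    sum_le_sum_of_subset_of_nonneg hst fun x _ _ => hw x
  linarith [hmono hunion, hmono hinter, sum_union_inter (s₁ := C) (s₂ := D) (f := w),
    sum_union_inter (s₁ := A) (s₂ := B) (f := w)]

theorem Finset.exists_pairwiseDisjoint_card_eq {α : Type*} {s : Finset α} {c k : ℕ}
    (hs : s.card = c * k) :
    ∃ S : Fin k → Finset α, (∀ j, S j ⊆ s) ∧ (∀ j, (S j).card = c) ∧ Pairwise (Disjoint on S) := by
  let e : Fin c × Fin k ≃ s := finProdFinEquiv.trans ((finCongr hs.symm).trans s.equivFin.symm)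
  have he : ∀ p q, (e p : α) = e q → p = q := fun p q h => e.injective (Subtype.ext h)
  refine ⟨fun j => univ.map ⟨fun a => e (a, j), fun a b h => (Prod.ext_iff.1 (he _ _ h)).1⟩,
    fun j x hx => ?_, fun j => by simp, fun j j' hjj' => ?_⟩
  · obtain ⟨a, -, rfl⟩ := mem_map.1 hx
    exact (e (a, j)).2
  · simp only [Function.onFun, disjoint_left, mem_map, mem_univ, true_and]
    rintro _ ⟨a, rfl⟩ ⟨b, hb⟩
    exact hjj' (Prod.ext_iff.1 (he _ _ hb)).2.symm

def consNegSum {G : Type*} [AddCommGroup G] {n : ℕ} (f : Fin n → G) : Fin (n + 1) → G :=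
  Fin.cons (-∑ j, f j) f

theorem exists_lt_consNegSum_ne {G : Type*} [AddCommGroup G] {n : ℕ} {f g : Fin n → G}
    (hfg : f ≠ g) : ∃ i j : Fin (n + 1), i < j ∧
      consNegSum f i ≠ consNegSum g i ∧ consNegSum f j ≠ consNegSum g j := by
  obtain ⟨j₀, hj₀⟩ := Function.ne_iff.1 hfg
  have hsucc : ∀ j, consNegSum f j.succ ≠ consNegSum g j.succ ↔ f j ≠ g j := fun j => by
    simp [consNegSum]
  by_cases htwo : ∃ j₁, j₁ ≠ j₀ ∧ f j₁ ≠ g j₁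
  · obtain ⟨j₁, hne, hj₁⟩ := htwo
    rcases hne.lt_or_gt with h | h
    · exact ⟨j₁.succ, j₀.succ, Fin.succ_lt_succ_iff.2 h, (hsucc _).2 hj₁, (hsucc _).2 hj₀⟩
    · exact ⟨j₀.succ, j₁.succ, Fin.succ_lt_succ_iff.2 h, (hsucc _).2 hj₀, (hsucc _).2 hj₁⟩
  · push Not at htwo
    -- a single differing coordinate is detected by the check coordinate
    have hsum : ∑ j, (f j - g j) = f j₀ - g j₀ :=
      Fintype.sum_eq_single j₀ fun j hj => sub_eq_zero.2 (htwo j hj)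
    refine ⟨0, j₀.succ, Fin.succ_pos _, ?_, (hsucc _).2 hj₀⟩
    simp only [consNegSum, Fin.cons_zero, ne_eq, neg_inj]
    rw [← sub_eq_zero, ← sum_sub_distrib, hsum, sub_eq_zero]
    exact hj₀

section Hierarchical

variable {α : Type*} [DecidableEq α] {m k : ℕ} {P : Fin m → Finset α}

def prefixUnion (P : Fin m → Finset α) (l : Fin m) : Finset α :=
  (univ.filter (· ≤ l)).biUnion P

def HierarchicalWin (P : Fin m → Finset α) (X : Finset α) : Prop :=
  ∃ i : Fin m, 2 * ((i : ℕ) + 1) ≤ (X ∩ prefixUnion P i).card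

theorem mem_prefixUnion {x : α} {l : Fin m} : x ∈ prefixUnion P l ↔ ∃ i ≤ l, x ∈ P i := by
  simp [prefixUnion]

theorem subset_prefixUnion {i l : Fin m} (h : i ≤ l) : P i ⊆ prefixUnion P l :=
  fun _ hx => mem_prefixUnion.2 ⟨i, h, hx⟩

theorem prefixUnion_mono : Monotone (prefixUnion P) := fun _ _ hll' _ hx => by
  obtain ⟨i, hi, hx⟩ := mem_prefixUnion.1 hx
  exact mem_prefixUnion.2 ⟨i, hi.trans hll', hx⟩

theorem disjoint_prefixUnion (hP : Pairwise (Disjoint on P)) {i l : Fin m} (h : l < i) :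
    Disjoint (P i) (prefixUnion P l) := by
  simp only [prefixUnion, disjoint_biUnion_right, mem_filter, mem_univ, true_and]
  exact fun j hj => hP (hj.trans_lt h).ne'

theorem card_inter_prefixUnion (hP : Pairwise (Disjoint on P)) (X : Finset α) (l : Fin m) :
    (X ∩ prefixUnion P l).card = ∑ i ∈ Iic l, (X ∩ P i).card := by
  rw [prefixUnion, filter_ge_eq_Iic, inter_biUnion, card_biUnion]
  exact fun i _ j _ hij => (hP hij).mono inf_le_right inf_le_right

def blockSize (i : Fin m) : ℕ := if (i : ℕ) = 0 then 1 else 2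

theorem sum_Iic_blockSize (l : Fin m) : ∑ i ∈ Iic l, blockSize i = 2 * l + 1 := by
  have hsum := sum_map (Iic l) Fin.valEmbedding fun j => if j = 0 then 1 else 2
  rw [Fin.map_valEmbedding_Iic, ← Nat.range_succ_eq_Iic, sum_range_succ'] at hsum
  simp only [Fin.valEmbedding_apply] at hsum
  simp only [blockSize, ← hsum]
  simp [mul_comm]

def blockUnion (S : Fin m → Fin k → Finset α) (v : Fin m → Fin k) : Finset α :=
  univ.biUnion fun i => S i (v i)

variable {S : Fin m → Fin k → Finset α}

theorem subset_blockUnion (v : Fin m → Fin k) (i : Fin m) : S i (v i) ⊆ blockUnion S v :=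
  subset_biUnion_of_mem (fun i => S i (v i)) (mem_univ i)

theorem blockUnion_inter (hP : Pairwise (Disjoint on P)) (hSP : ∀ i j, S i j ⊆ P i)
    (v : Fin m → Fin k) (i : Fin m) : blockUnion S v ∩ P i = S i (v i) := by
  refine Subset.antisymm (fun x hx => ?_) (subset_inter (subset_blockUnion v i) (hSP i _))
  obtain ⟨hxA, hxP⟩ := mem_inter.1 hx
  obtain ⟨i', -, hx'⟩ := mem_biUnion.1 hxA
  obtain rfl : i' = i := by_contra fun hne => disjoint_left.1 (hP hne) (hSP _ _ hx') hxP
  exact hx'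

theorem card_blockUnion_inter_prefixUnion (hP : Pairwise (Disjoint on P))
    (hSP : ∀ i j, S i j ⊆ P i) (hScard : ∀ i j, (S i j).card = blockSize i)
    (v : Fin m → Fin k) (l : Fin m) :
    (blockUnion S v ∩ prefixUnion P l).card = 2 * l + 1 := by
  simp only [card_inter_prefixUnion hP, blockUnion_inter hP hSP, hScard, sum_Iic_blockSize]

theorem not_hierarchicalWin_blockUnion (hP : Pairwise (Disjoint on P))
    (hSP : ∀ i j, S i j ⊆ P i) (hScard : ∀ i j, (S i j).card = blockSize i)
    (v : Fin m → Fin k) : ¬ HierarchicalWin P (blockUnion S v) := by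
  rintro ⟨i, hi⟩
  rw [card_blockUnion_inter_prefixUnion hP hSP hScard] at hi
  omega

theorem hierarchicalWin_insert_inter_prefixUnion (hP : Pairwise (Disjoint on P))
    (hSP : ∀ i j, S i j ⊆ P i) (hScard : ∀ i j, (S i j).card = blockSize i)
    {v : Fin m → Fin k} {i : Fin m} {b : α} (hbP : b ∈ P i) (hbA : b ∉ blockUnion S v) :
    HierarchicalWin P (insert b (blockUnion S v ∩ prefixUnion P i)) := by
  refine ⟨i, ?_⟩
  rw [inter_eq_left.2 (insert_subset (subset_prefixUnion le_rfl hbP) inter_subset_right),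
    card_insert_of_notMem fun hb => hbA (mem_inter.1 hb).1,
    card_blockUnion_inter_prefixUnion hP hSP hScard]
  omega

theorem hierarchicalWin_sdiff_union_erase (hP : Pairwise (Disjoint on P))
    (hSP : ∀ i j, S i j ⊆ P i) (hSdisj : ∀ i, Pairwise (Disjoint on S i))
    (hScard : ∀ i j, (S i j).card = blockSize i)
    {v u : Fin m → Fin k} {i₁ i₂ : Fin m} (h₁₂ : i₁ < i₂) (hvu : v i₂ ≠ u i₂) {b : α}
    (hbA : b ∈ blockUnion S u) (hbP : b ∈ P i₁) :
    HierarchicalWin P ((blockUnion S v \ prefixUnion P i₁) ∪ (blockUnion S u).erase b) := by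
  refine ⟨i₂, ?_⟩
  have hdisj : Disjoint (S i₂ (v i₂)) ((blockUnion S u ∩ prefixUnion P i₂).erase b) := by
    refine disjoint_left.2 fun x hxS hx => disjoint_left.1 (hSdisj i₂ hvu) hxS ?_
    rw [← blockUnion_inter hP hSP u i₂]
    exact mem_inter.2 ⟨(mem_inter.1 (mem_of_mem_erase hx)).1, hSP _ _ hxS⟩
  have hsub : S i₂ (v i₂) ∪ (blockUnion S u ∩ prefixUnion P i₂).erase b ⊆
      ((blockUnion S v \ prefixUnion P i₁) ∪ (blockUnion S u).erase b) ∩ prefixUnion P i₂ := by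
    have hS₂ : Disjoint (S i₂ (v i₂)) (prefixUnion P i₁) :=
      (disjoint_prefixUnion hP h₁₂).mono_left (hSP _ _)
    intro x hx
    simp only [mem_union, mem_inter, mem_sdiff, mem_erase] at hx ⊢
    rcases hx with hx | ⟨hxb, hxA, hxQ⟩
    · exact ⟨Or.inl ⟨subset_blockUnion v i₂ hx, disjoint_left.1 hS₂ hx⟩,
        subset_prefixUnion le_rfl (hSP _ _ hx)⟩
    · exact ⟨Or.inr ⟨hxb, hxA⟩, hxQ⟩
  have hb : b ∈ blockUnion S u ∩ prefixUnion P i₂ :=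
    mem_inter.2 ⟨hbA, prefixUnion_mono h₁₂.le (subset_prefixUnion le_rfl hbP)⟩
  have := card_le_card hsub
  rw [card_union_of_disjoint hdisj, card_erase_of_mem hb, hScard,
    card_blockUnion_inter_prefixUnion hP hSP hScard, blockSize, if_neg (by omega)] at this
  omega

theorem IsWeighted.blockUnion_or_blockUnion {V : Finset α → Prop} [Fintype α]
    (hV : IsWeighted V) (hWV : ∀ X, HierarchicalWin P X → V X)
    (hP : Pairwise (Disjoint on P)) (hSP : ∀ i j, S i j ⊆ P i)
    (hSdisj : ∀ i, Pairwise (Disjoint on S i))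
    (hScard : ∀ i j, (S i j).card = blockSize i)
    {v u : Fin m → Fin k} {i₁ i₂ : Fin m} (h₁₂ : i₁ < i₂)
    (hvu₁ : v i₁ ≠ u i₁) (hvu₂ : v i₂ ≠ u i₂) :
    V (blockUnion S v) ∨ V (blockUnion S u) := by
  obtain ⟨b, hb⟩ : (S i₁ (u i₁)).Nonempty := card_pos.1 (by rw [hScard, blockSize]; split <;> omega)
  have hbA : b ∉ blockUnion S v := fun hbA => by
    have : b ∈ blockUnion S v ∩ P i₁ := mem_inter.2 ⟨hbA, hSP _ _ hb⟩
    rw [blockUnion_inter hP hSP] at this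
    exact disjoint_left.1 (hSdisj i₁ hvu₁) this hb
  refine hV.or_of_union_subset_of_inter_subset
    (hWV _ (hierarchicalWin_insert_inter_prefixUnion hP hSP hScard (hSP _ _ hb) hbA))
    (hWV _ (hierarchicalWin_sdiff_union_erase hP hSP hSdisj hScard h₁₂ hvu₂
      (subset_blockUnion u i₁ hb) (hSP _ _ hb))) ?_ ?_
  · have := subset_blockUnion u i₁ hb
    intro x
    simp only [mem_union, mem_insert, mem_inter, mem_sdiff, mem_erase]
    grind
  · intro x
    simp only [mem_union, mem_insert, mem_inter, mem_sdiff, mem_erase]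
    grind

end Hierarchical

/-- Let `k ≥ 2`, `m ≥ 2`, and `P = P₀ ∪ … ∪ P_{m-1}` with `|P₀| = k` and
`|Pᵢ| = 2k` for `i ≥ 1`. Let `H` be the disjunctive hierarchical game in which
`X` wins iff `|X ∩ (P₀ ∪ … ∪ Pᵢ)| ≥ 2(i+1)` for some `i`. Then
`dim H ≥ k^(m-1)`. -/
theorem hexists_dim_ge_pow {α : Type*} [Fintype α] [DecidableEq α]
    (k m : ℕ) (hk : 2 ≤ k) (hm : 2 ≤ m)
    (P : Fin m → Finset α)
    (hdisj : ∀ i j : Fin m, i ≠ j → Disjoint (P i) (P j))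
    (h₀ : (P ⟨0, by omega⟩).card = k)
    (hi : ∀ i : Fin m, 1 ≤ (i : ℕ) → (P i).card = 2 * k)
    (W : Finset α → Prop)
    (hW : ∀ X : Finset α, W X ↔ ∃ i : Fin m,
      2 * ((i : ℕ) + 1) ≤ (X ∩ (Finset.univ.filter (· ≤ i)).biUnion P).card)
    (n : ℕ) (V : Fin n → Finset α → Prop)
    (hVw : ∀ t, IsWeighted (V t))
    (hrep : ∀ X : Finset α, W X ↔ ∀ t, V t X) :
    k ^ (m - 1) ≤ n := by
  obtain ⟨m, rfl⟩ : ∃ m', m = m' + 1 := ⟨m - 1, by omega⟩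
  have : NeZero k := ⟨by omega⟩
  have hP : Pairwise (Disjoint on P) := fun i j => hdisj i j
  have hPcard (i : Fin (m + 1)) : (P i).card = blockSize i * k := by
    unfold blockSize
    split_ifs with h
    · rw [one_mul, ← h₀, show i = ⟨0, by omega⟩ from Fin.ext h]
    · exact hi i (Nat.one_le_iff_ne_zero.2 h)
  choose S hSP hScard hSdisj using fun i => exists_pairwiseDisjoint_card_eq (hPcard i)
  have hWV (t : Fin n) X (hX : HierarchicalWin P X) : V t X := (hrep X).1 ((hW X).2 hX) t
  have hlose (f : Fin m → Fin k) : ∃ t, ¬ V t (blockUnion S (consNegSum f)) := by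
    by_contra! h
    exact not_hierarchicalWin_blockUnion hP hSP hScard _ ((hW _).1 ((hrep _).2 h))
  choose t ht using hlose
  have ht_inj : Injective t := fun f g hfg => by
    by_contra hne
    obtain ⟨i₁, i₂, h₁₂, hne₁, hne₂⟩ := exists_lt_consNegSum_ne hne
    rcases (hVw (t g)).blockUnion_or_blockUnion (hWV _) hP hSP hSdisj hScard h₁₂ hne₁ hne₂
      with h | h
    · exact ht f (hfg ▸ h)
    · exact ht g h
  simpa using Fintype.card_le_of_injective t ht_inj
end

section
/- For fixed k ≥ 2, there exists a sequence of complete simple games G_m on n_m = k + 2k(m−1) players whose dimension grows exponentially in the number of players: dim(G_m) ≥ k^{m−1} = k^{(n_m − k)/(2k)}. -/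
/-!
For `v : Fin (m - 1) → Fin k` let `L_v` consist of the pair of colour `v j` in every class `j + 1`
together with the class-`0` player `∑ v` (mod `k`). Each `L_v` is losing, and for `v ≠ w` some two
winning coalitions `A, B` satisfy `A + B ≤ L_v + L_w` as multisets: if the checksums differ they
win at level `0`; otherwise `v, w` differ in at least two classes, and exchanging the pairs of `v`
and `w` in these two classes makes both `A` and `B` one player stronger than `L_v`. Since weights
add up, a weighted game cannot accept `A, B` and reject both `L_v, L_w`, so each weighted game of a
representation rejects at most one `L_v`.
-/

open Finset

section Trades

variable {α β : Type*} [DecidableEq α]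

/-- `A ∪ B ⊆ C ∪ D` and `A ∩ B ⊆ C ∩ D` together say `A + B ≤ C + D` as multisets. -/
def TradedFromWinning (W : Finset α → Prop) (C D : Finset α) : Prop :=
  ∃ A B, W A ∧ W B ∧ A ∪ B ⊆ C ∪ D ∧ A ∩ B ⊆ C ∩ D

lemma TradedFromWinning.mono {W W' : Finset α → Prop} {C D : Finset α} (hWW' : ∀ X, W X → W' X)
    (h : TradedFromWinning W C D) : TradedFromWinning W' C D :=
  let ⟨A, B, hA, hB, hU, hI⟩ := h
  ⟨A, B, hWW' A hA, hWW' B hB, hU, hI⟩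

lemma TradedFromWinning.map [DecidableEq β] (f : α ↪ β) {W : Finset β → Prop} {C D : Finset α}
    (h : TradedFromWinning (fun X => W (X.map f)) C D) :
    TradedFromWinning W (C.map f) (D.map f) := by
  obtain ⟨A, B, hA, hB, hU, hI⟩ := h
  refine ⟨A.map f, B.map f, hA, hB, ?_, ?_⟩
  · simpa only [← map_union] using map_subset_map.mpr hU
  · simpa only [← map_inter] using map_subset_map.mpr hI

lemma IsWeighted.left_or_right_of_tradedFromWinning [Fintype α] {W : Finset α → Prop}
    {C D : Finset α} (hW : IsWeighted W) (h : TradedFromWinning W C D) : W C ∨ W D := by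
  obtain ⟨w, q, hw, -, hWq⟩ := hW
  obtain ⟨A, B, hA, hB, hU, hI⟩ := h
  simp only [hWq] at hA hB ⊢
  have hsum : ∑ i ∈ A, w i + ∑ i ∈ B, w i ≤ ∑ i ∈ C, w i + ∑ i ∈ D, w i := by
    rw [← sum_union_inter, ← sum_union_inter (s₁ := C)]
    exact add_le_add (sum_le_sum_of_subset_of_nonneg hU fun i _ _ => hw i)
      (sum_le_sum_of_subset_of_nonneg hI fun i _ _ => hw i)
  by_contra! hCD
  linarith

theorem card_le_of_pairwise_tradedFromWinning {ι : Type*} [Fintype ι] [Fintype α]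
    {W : Finset α → Prop} {n : ℕ} {V : Fin n → Finset α → Prop} (hV : ∀ t, IsWeighted (V t))
    (hWV : ∀ X, W X ↔ ∀ t, V t X) (L : ι → Finset α) (hL : ∀ i, ¬ W (L i))
    (hLL : Pairwise fun i j => TradedFromWinning W (L i) (L j)) :
    Fintype.card ι ≤ n := by
  have hLV : ∀ i, ∃ t, ¬ V t (L i) := fun i => not_forall.mp fun h => hL i ((hWV _).mpr h)
  choose T hT using hLV
  have hT_inj : T.Injective := by
    intro i j hij
    by_contra hne
    have hTrade := (hLL hne).mono fun X hX => (hWV X).mp hX (T i)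
    rcases (hV (T i)).left_or_right_of_tradedFromWinning hTrade with h | h
    · exact hT i h
    · exact hT j (hij ▸ h)
  simpa using Fintype.card_le_of_injective T hT_inj

end Trades

section DisjunctiveHierarchical

variable {α β : Type*} (ρ : α → ℕ) (τ : ℕ → ℕ)

/-- The game `H_∃` whose `t`-th class is `ρ ⁻¹' {t}`, with thresholds `τ`. -/
def disjHierGame (X : Finset α) : Prop :=
  ∃ t, τ t ≤ #{p ∈ X | ρ p ≤ t}

variable {ρ τ}

lemma disjHierGame_mono {X Y : Finset α} (hXY : X ⊆ Y) (hX : disjHierGame ρ τ X) :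
    disjHierGame ρ τ Y :=
  let ⟨t, ht⟩ := hX
  ⟨t, ht.trans (card_le_card (filter_subset_filter _ hXY))⟩

lemma disjHierGame_of_subset {C X : Finset α} {t : ℕ} (hCX : C ⊆ X) (hC : ∀ p ∈ C, ρ p ≤ t)
    (hτ : τ t ≤ #C) : disjHierGame ρ τ X :=
  ⟨t, hτ.trans (card_le_card fun p hp => mem_filter.mpr ⟨hCX hp, hC p hp⟩)⟩

lemma disjHierGame_insert_of_le [DecidableEq α] {i j : α} {X : Finset α} (hij : ρ i ≤ ρ j)
    (hi : i ∉ X) (h : disjHierGame ρ τ (insert j X)) : disjHierGame ρ τ (insert i X) := by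
  obtain ⟨t, ht⟩ := h
  refine ⟨t, ht.trans ?_⟩
  by_cases hjt : ρ j ≤ t
  · rw [filter_insert, filter_insert, if_pos hjt, if_pos (hij.trans hjt),
      card_insert_of_notMem (a := i) (by simp [hi])]
    exact card_insert_le _ _
  · rw [filter_insert, if_neg hjt]
    exact card_le_card (filter_subset_filter _ (subset_insert _ _))

lemma disjHierGame_desirability_total [DecidableEq α] (i j : α) :
    (∀ X, i ∉ X → disjHierGame ρ τ (insert j X) → disjHierGame ρ τ (insert i X)) ∨
      (∀ X, j ∉ X → disjHierGame ρ τ (insert i X) → disjHierGame ρ τ (insert j X)) :=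
  (le_total (ρ i) (ρ j)).imp (fun h _ => disjHierGame_insert_of_le h)
    (fun h _ => disjHierGame_insert_of_le h)

lemma disjHierGame_map (f : α ↪ β) (ρ : β → ℕ) (X : Finset α) :
    disjHierGame ρ τ (X.map f) ↔ disjHierGame (ρ ∘ f) τ X := by
  simp only [disjHierGame, filter_map, card_map]
  rfl

lemma disjHierGame_comp_equiv (e : α ≃ β) (ρ : β → ℕ) :
    (fun X => disjHierGame (ρ ∘ e) τ (X.map e.symm.toEmbedding)) = disjHierGame ρ τ := by
  ext X
  rw [disjHierGame_map, Equiv.coe_toEmbedding, Function.comp_assoc, e.self_comp_symm,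
    Function.comp_id]

end DisjunctiveHierarchical

lemma exists_ne_apply_ne_of_sum_eq {ι M : Type*} [Fintype ι] [DecidableEq ι]
    [AddCancelCommMonoid M] {f g : ι → M} (hfg : ∑ j, f j = ∑ j, g j) {i : ι} (hi : f i ≠ g i) :
    ∃ j ≠ i, f j ≠ g j := by
  by_contra! h
  have herase : ∑ j ∈ univ.erase i, f j = ∑ j ∈ univ.erase i, g j :=
    sum_congr rfl fun j hj => h j (ne_of_mem_erase hj)
  refine hi (add_right_cancel (b := ∑ j ∈ univ.erase i, f j) ?_)
  rw [add_sum_erase _ _ (mem_univ i), hfg, herase, add_sum_erase _ _ (mem_univ i)]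

namespace ExpDimGame

variable {k r : ℕ}

/-- The players of `G_{r+1}`: class `0` is `Fin k`, and class `j + 1` consists of the `2k` players
`(j, c, b)`, forming `k` pairs indexed by the colour `c`. -/
abbrev Player (k r : ℕ) := Fin k ⊕ (Fin r × Fin k × Bool)

def rank : Player k r → ℕ
  | .inl _ => 0
  | .inr x => x.1 + 1

@[simp] lemma rank_inl (a : Fin k) : rank (.inl a : Player k r) = 0 := rfl

@[simp] lemma rank_inr (j : Fin r) (c : Fin k) (b : Bool) :
    rank (.inr (j, c, b) : Player k r) = j + 1 := rfl

lemma rank_le : ∀ p : Player k r, rank p ≤ r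
  | .inl _ => Nat.zero_le r
  | .inr x => x.1.isLt

def game : Finset (Player k r) → Prop :=
  disjHierGame rank fun t => 2 * (t + 1)

def pairs (v : Fin r → Fin k) (s : Finset (Fin r)) : Finset (Player k r) :=
  (s ×ˢ univ).image fun x => .inr (x.1, v x.1, x.2)

@[simp] lemma inl_notMem_pairs {v : Fin r → Fin k} {s : Finset (Fin r)} (a : Fin k) :
    .inl a ∉ pairs v s := by
  simp [pairs]

@[simp] lemma inr_mem_pairs {v : Fin r → Fin k} {s : Finset (Fin r)} {j : Fin r} {c : Fin k}
    {b : Bool} : .inr (j, c, b) ∈ pairs v s ↔ j ∈ s ∧ v j = c := by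
  simp [pairs]

lemma card_pairs (v : Fin r → Fin k) (s : Finset (Fin r)) : #(pairs v s) = 2 * #s := by
  rw [pairs, card_image_of_injective _ fun x y h => ?_]
  · simp [mul_comm]
  · simp only [Sum.inr.injEq, Prod.mk.injEq] at h
    exact Prod.ext h.1 h.2.2

variable [NeZero k]

def losingCoalition (v : Fin r → Fin k) : Finset (Player k r) :=
  insert (.inl (∑ j, v j)) (pairs v univ)

@[simp] lemma inl_mem_losingCoalition {v : Fin r → Fin k} {a : Fin k} :
    .inl a ∈ losingCoalition v ↔ a = ∑ j, v j := by
  simp [losingCoalition]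

@[simp] lemma inr_mem_losingCoalition {v : Fin r → Fin k} {j : Fin r} {c : Fin k} {b : Bool} :
    .inr (j, c, b) ∈ losingCoalition v ↔ v j = c := by
  simp [losingCoalition]

lemma not_game_losingCoalition (v : Fin r → Fin k) : ¬ game (losingCoalition v) := by
  rintro ⟨t, ht : 2 * (t + 1) ≤ _⟩
  have hsub : {p ∈ losingCoalition v | rank p ≤ t} ⊆
      insert (.inl (∑ j, v j)) (pairs v {j | (j : ℕ) < t}) := by
    rintro (a | ⟨j, c, b⟩) <;> simp
    omega
  have := (card_le_card hsub).trans (card_insert_le _ _)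
  rw [card_pairs, Fin.card_filter_val_lt] at this
  omega

/-- The two checksums win at level `0`; the pairs of `v` up to class `j₀ + 1` together with the
pair of `w` in that class win at level `j₀ + 1`. -/
lemma tradedFromWinning_of_sum_ne {v w : Fin r → Fin k} (hsum : ∑ j, v j ≠ ∑ j, w j) {j₀ : Fin r}
    (hj₀ : v j₀ ≠ w j₀) : TradedFromWinning game (losingCoalition v) (losingCoalition w) := by
  refine ⟨{.inl (∑ j, v j), .inl (∑ j, w j)}, pairs v (Iic j₀) ∪ pairs w {j₀}, ?_, ?_, ?_, ?_⟩
  · refine disjHierGame_of_subset (t := 0) subset_rfl (by simp) ?_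
    rw [card_pair (by simpa using hsum)]
  · refine disjHierGame_of_subset (t := j₀ + 1) subset_rfl ?_ ?_
    · rintro (a | ⟨j, c, b⟩) <;> simp
      grind [Fin.le_def]
    · have hdisj : Disjoint (pairs v (Iic j₀)) (pairs w {j₀}) := by
        rw [disjoint_left]
        rintro (a | ⟨j, c, b⟩) <;> simp
        grind
      rw [card_union_of_disjoint hdisj, card_pairs, card_pairs, Fin.card_Iic, card_singleton]
      omega
  · rintro (a | ⟨j, c, b⟩) <;> simp
    grind
  · rintro (a | ⟨j, c, b⟩) <;> simp

/-- Both coalitions contain the common checksum and the pairs below class `j₁ + 1`, where `v = w`;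
they split the pair of `w` in class `j₁ + 1`, and in the second one the pair of `w` in class
`j₂ + 1` replaces the pair of `v` in class `j₁ + 1`. -/
lemma tradedFromWinning_of_sum_eq {v w : Fin r → Fin k} (hsum : ∑ j, v j = ∑ j, w j)
    {j₁ j₂ : Fin r} (hj₁ : v j₁ ≠ w j₁) (hj₂ : v j₂ ≠ w j₂) (hj₁₂ : j₁ ≠ j₂)
    (hlt : ∀ j < j₁, v j = w j) :
    TradedFromWinning game (losingCoalition v) (losingCoalition w) := by
  refine ⟨insert (.inr (j₁, w j₁, false)) (insert (.inl (∑ j, v j)) (pairs v (Iic j₁))),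
    insert (.inr (j₁, w j₁, true)) (insert (.inl (∑ j, v j)) (pairs v {j₁}ᶜ ∪ pairs w {j₂})),
    ?_, ?_, ?_, ?_⟩
  · refine disjHierGame_of_subset (t := j₁ + 1) subset_rfl ?_ ?_
    · rintro (a | ⟨j, c, b⟩) <;> simp
      grind [Fin.le_def]
    · rw [card_insert_of_notMem (by simp; grind), card_insert_of_notMem (by simp), card_pairs,
        Fin.card_Iic]
      omega
  · refine disjHierGame_of_subset (t := r) subset_rfl (fun p _ => rank_le p) ?_
    have hdisj : Disjoint (pairs v {j₁}ᶜ) (pairs w {j₂}) := by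
      rw [disjoint_left]
      rintro (a | ⟨j, c, b⟩) <;> simp
      grind
    rw [card_insert_of_notMem (by simp; grind), card_insert_of_notMem (by simp),
      card_union_of_disjoint hdisj, card_pairs, card_pairs, card_compl, card_singleton,
      card_singleton, Fintype.card_fin]
    have := j₁.pos
    omega
  · rintro (a | ⟨j, c, b⟩) <;> simp <;> grind
  · rintro (a | ⟨j, c, b⟩) <;> simp <;> grind

lemma tradedFromWinning_losingCoalition {v w : Fin r → Fin k} (hvw : v ≠ w) :
    TradedFromWinning game (losingCoalition v) (losingCoalition w) := by
  obtain ⟨j₁, hj₁, hmin⟩ := wellFounded_lt.has_min {j | v j ≠ w j} (Function.ne_iff.mp hvw)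
  have hlt : ∀ j < j₁, v j = w j := fun j hj => by_contra fun hne => hmin j hne hj
  by_cases hsum : ∑ j, v j = ∑ j, w j
  · obtain ⟨j₂, hj₂₁, hj₂⟩ := exists_ne_apply_ne_of_sum_eq hsum hj₁
    exact tradedFromWinning_of_sum_eq hsum hj₁ hj₂ hj₂₁.symm hlt
  · exact tradedFromWinning_of_sum_ne hsum hj₁

end ExpDimGame

open ExpDimGame in
/-- For fixed `k ≥ 2` there is a sequence of complete simple games `G_m` on
`n_m = k + 2k(m-1)` players whose dimension grows exponentially in the number
of players: `dim G_m ≥ k^(m-1)`. Here "complete" means the desirability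
relation is total, and the dimension lower bound is expressed by saying that
any representation of `G_m` as an intersection of weighted games uses at least
`k^(m-1)` of them. -/
theorem complete_games_exponential_dimension (k : ℕ) (hk : 2 ≤ k) :
    ∀ m : ℕ, 2 ≤ m →
    ∃ W : Finset (Fin (k + 2 * k * (m - 1))) → Prop,
      -- `W` is monotone, hence a simple game
      (∀ X Y : Finset (Fin (k + 2 * k * (m - 1))), X ⊆ Y → W X → W Y) ∧
      -- the game is complete: the desirability relation is total
      (∀ i j : Fin (k + 2 * k * (m - 1)),
        (∀ X : Finset (Fin (k + 2 * k * (m - 1))), i ∉ X → j ∉ X →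
            W (insert j X) → W (insert i X)) ∨
        (∀ X : Finset (Fin (k + 2 * k * (m - 1))), i ∉ X → j ∉ X →
            W (insert i X) → W (insert j X))) ∧
      -- dimension at least `k^(m-1)`
      (∀ (n : ℕ) (V : Fin n → Finset (Fin (k + 2 * k * (m - 1))) → Prop),
        (∀ t, IsWeighted (V t)) →
        (∀ X, W X ↔ ∀ t, V t X) →
        k ^ (m - 1) ≤ n) := by
  intro m _
  have : NeZero k := ⟨by omega⟩
  let e : Fin (k + 2 * k * (m - 1)) ≃ Player k (m - 1) := Fintype.equivOfCardEq (by simp; ring)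
  let G := disjHierGame (rank ∘ e) fun t => 2 * (t + 1)
  have hG : (fun X => G (X.map e.symm.toEmbedding)) = game := disjHierGame_comp_equiv e rank
  refine ⟨G, fun _ _ => disjHierGame_mono, fun i j => (disjHierGame_desirability_total i j).imp
    (fun h X hi _ => h X hi) (fun h X _ hj => h X hj), fun n V hV hGV => ?_⟩
  simpa using card_le_of_pairwise_tradedFromWinning hV hGV
    (fun v => (losingCoalition v).map e.symm.toEmbedding)
    (fun v h => not_game_losingCoalition v (hG ▸ h))
    (fun v w hvw => (hG ▸ tradedFromWinning_losingCoalition hvw).map e.symm.toEmbedding)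
end

section
/- The disjunctive hierarchical game H = H_∃(P, (2,5)) with P = P_1 ∪ P_2, |P_1| = 2, |P_2| = 5 (winning: at least 2 players from P_1, or at least 5 players in total) is not weighted, and it is the intersection of two weighted games; hence dim(H) = 2. -/
open Finset

theorem Finset.card_le_card_inter_iff_subset {α : Type*} [DecidableEq α] {s X : Finset α} :
    #s ≤ #(X ∩ s) ↔ s ⊆ X := by
  rw [← inter_eq_right]
  exact ⟨fun h => eq_of_subset_of_card_le inter_subset_right h, fun h => by rw [h]⟩

theorem Nat.cast_le_add_iff_of_lt_one {m n : ℕ} {ε : ℝ} (hε₀ : 0 ≤ ε) (hε₁ : ε < 1) :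
    (m : ℝ) ≤ n + ε ↔ m ≤ n := by
  refine ⟨fun h => ?_, fun h => by linarith [(Nat.cast_le (α := ℝ)).2 h]⟩
  by_contra! hlt
  have : (n : ℝ) + 1 ≤ m := by exact_mod_cast hlt
  linarith

section Weighted

variable {α : Type*} [Fintype α]

theorem isWeighted_le_sum {w : α → ℝ} {q : ℝ} (hw : ∀ i, 0 ≤ w i) (hq : 0 < q) :
    IsWeighted fun X => q ≤ ∑ i ∈ X, w i :=
  ⟨w, q, hw, hq, fun _ => Iff.rfl⟩

theorem IsWeighted.left_or_right_of_union_eq [DecidableEq α] {W : Finset α → Prop}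
    (hW : IsWeighted W) {X₁ X₂ Y₁ Y₂ : Finset α} (hX : Disjoint X₁ X₂) (hY : Disjoint Y₁ Y₂)
    (hXY : X₁ ∪ X₂ = Y₁ ∪ Y₂) (h₁ : W X₁) (h₂ : W X₂) : W Y₁ ∨ W Y₂ := by
  obtain ⟨w, q, -, -, hwq⟩ := hW
  have hsum : ∑ i ∈ X₁, w i + ∑ i ∈ X₂, w i = ∑ i ∈ Y₁, w i + ∑ i ∈ Y₂, w i := by
    rw [← sum_union hX, ← sum_union hY, hXY]
  simp only [hwq] at h₁ h₂ ⊢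
  by_contra! h
  linarith [h.1, h.2]

def IsIntersectionOfWeighted (W : Finset α → Prop) (n : ℕ) : Prop :=
  ∃ V : Fin n → Finset α → Prop, (∀ i, IsWeighted (V i)) ∧ ∀ X, W X ↔ ∀ i, V i X

variable {W : Finset α → Prop}

theorem isIntersectionOfWeighted_zero_iff : IsIntersectionOfWeighted W 0 ↔ ∀ X, W X :=
  ⟨fun ⟨_, _, hV⟩ X => (hV X).2 finZeroElim,
    fun h => ⟨finZeroElim, finZeroElim, fun X => iff_of_true (h X) finZeroElim⟩⟩

theorem isIntersectionOfWeighted_one_iff : IsIntersectionOfWeighted W 1 ↔ IsWeighted W := by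
  constructor
  · rintro ⟨V, hVw, hV⟩
    obtain ⟨w, q, hw, hq, hwq⟩ := hVw 0
    exact ⟨w, q, hw, hq, fun X => by rw [hV, Fin.forall_fin_one, hwq]⟩
  · intro hW
    exact ⟨fun _ => W, fun _ => hW, fun X => by simp⟩

theorem isIntersectionOfWeighted_two_iff : IsIntersectionOfWeighted W 2 ↔
    ∃ V₁ V₂ : Finset α → Prop, IsWeighted V₁ ∧ IsWeighted V₂ ∧ ∀ X, W X ↔ V₁ X ∧ V₂ X := by
  constructor
  · rintro ⟨V, hVw, hV⟩
    exact ⟨V 0, V 1, hVw 0, hVw 1, fun X => by rw [hV, Fin.forall_fin_two]⟩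
  · rintro ⟨V₁, V₂, hV₁, hV₂, hV⟩
    exact ⟨![V₁, V₂], Fin.forall_fin_two.2 ⟨hV₁, hV₂⟩, fun X => by
      simp [hV, Fin.forall_fin_two]⟩

theorem sInf_isIntersectionOfWeighted_eq_two (h₀ : ¬ W ∅) (h₁ : ¬ IsWeighted W)
    (h₂ : IsIntersectionOfWeighted W 2) : sInf {n | IsIntersectionOfWeighted W n} = 2 := by
  refine le_antisymm (Nat.sInf_le h₂) (le_csInf ⟨2, h₂⟩ fun n hn => ?_)
  by_contra! hn2
  interval_cases n
  · exact h₀ (isIntersectionOfWeighted_zero_iff.1 hn ∅)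
  · exact h₁ (isIntersectionOfWeighted_one_iff.1 hn)

end Weighted

section PairOrCardGame

variable {α : Type*} [DecidableEq α]

/-- `H_∃(P, (2, k))` with `P₁ = {a, b}`. -/
def pairOrCardGame (a b : α) (k : ℕ) (X : Finset α) : Prop :=
  (a ∈ X ∧ b ∈ X) ∨ k ≤ #X

variable {a b : α} {k : ℕ}

theorem pairOrCardGame_iff_card_inter (hab : a ≠ b) {X : Finset α} :
    pairOrCardGame a b k X ↔ 2 ≤ #(X ∩ {a, b}) ∨ k ≤ #X := by
  rw [pairOrCardGame, ← card_pair hab, card_le_card_inter_iff_subset, insert_subset_iff,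
    singleton_subset_iff]

theorem not_isWeighted_pairOrCardGame [Fintype α] (hab : a ≠ b) {P : Finset α} (ha : a ∉ P)
    (hb : b ∉ P) (hP : #P = k) (hk : 4 ≤ k) : ¬ IsWeighted (pairOrCardGame a b k) := by
  intro hW
  obtain ⟨C, hCP, hC⟩ := exists_subset_card_eq (s := P) (n := 2) (by omega)
  have hD : #(P \ C) = k - 2 := by rw [card_sdiff_of_subset hCP]; omega
  have haC : a ∉ C := fun h => ha (hCP h)
  have hbC : b ∉ C := fun h => hb (hCP h)
  have haD : a ∉ P \ C := fun h => ha (mem_sdiff.1 h).1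
  have hbD : b ∉ P \ C := fun h => hb (mem_sdiff.1 h).1
  have hlose₁ : ¬ pairOrCardGame a b k (insert a C) := by
    simp [pairOrCardGame, hab.symm, hbC, card_insert_of_notMem haC, hC]; omega
  have hlose₂ : ¬ pairOrCardGame a b k (insert b (P \ C)) := by
    simp [pairOrCardGame, hab, haD, card_insert_of_notMem hbD, hD]; omega
  have hunion : {a, b} ∪ P = insert a C ∪ insert b (P \ C) := by
    ext x; simp only [mem_union, mem_insert, mem_singleton, mem_sdiff]
    have := @hCP x; tauto
  have hdisj : Disjoint (insert a C) (insert b (P \ C)) := by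
    simp [disjoint_insert_left, disjoint_insert_right, hab.symm, haD, hbC, disjoint_sdiff]
  rcases hW.left_or_right_of_union_eq (by simp [ha, hb]) hdisj hunion
    (Or.inl (by simp)) (Or.inr hP.ge) with h | h
  exacts [hlose₁ h, hlose₂ h]

def boostedWeight (a b : α) (x y : ℝ) (i : α) : ℝ :=
  1 + (if i = a then x else 0) + (if i = b then y else 0)

theorem sum_boostedWeight (a b : α) (x y : ℝ) (X : Finset α) :
    ∑ i ∈ X, boostedWeight a b x y i =
      #X + (if a ∈ X then x else 0) + (if b ∈ X then y else 0) := by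
  simp [boostedWeight, sum_add_distrib]

theorem pairOrCardGame_iff_boostedWeight (hab : a ≠ b) (hk : 2 ≤ k) (X : Finset α) :
    pairOrCardGame a b k X ↔
      k ≤ ∑ i ∈ X, boostedWeight a b (k - 2) 0.1 i ∧
        k ≤ ∑ i ∈ X, boostedWeight a b 0.1 (k - 2) i := by
  have hk' : (2 : ℝ) ≤ k := by exact_mod_cast hk
  have hcut : (k : ℝ) ≤ #X + 0.1 ↔ k ≤ #X :=
    Nat.cast_le_add_iff_of_lt_one (by norm_num) (by norm_num)
  simp only [sum_boostedWeight, pairOrCardGame]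
  by_cases ha : a ∈ X <;> by_cases hb : b ∈ X <;> simp only [ha, hb, if_true, if_false]
  · have hsub : {a, b} ⊆ X := by simp [insert_subset_iff, ha, hb]
    have h2 : (2 : ℝ) ≤ #X := by exact_mod_cast (card_pair hab).symm.trans_le (card_le_card hsub)
    simp only [true_and, true_or, true_iff]; constructor <;> linarith
  · simp only [and_false, false_or, add_zero]
    constructor
    · intro h; have : (k : ℝ) ≤ #X := by exact_mod_cast h
      constructor <;> linarith
    · exact fun h => hcut.1 h.2
  · simp only [false_and, false_or, add_zero]
    constructor
    · intro h; have : (k : ℝ) ≤ #X := by exact_mod_cast h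
      constructor <;> linarith
    · exact fun h => hcut.1 (by linarith [h.1])
  · simp

theorem isIntersectionOfWeighted_two_pairOrCardGame [Fintype α] (hab : a ≠ b) (hk : 2 ≤ k) :
    IsIntersectionOfWeighted (pairOrCardGame a b k) 2 := by
  have hk' : (2 : ℝ) ≤ k := by exact_mod_cast hk
  have hpos : ∀ x y : ℝ, 0 ≤ x → 0 ≤ y → ∀ i, 0 ≤ boostedWeight a b x y i := by
    intro x y hx hy i
    unfold boostedWeight
    split_ifs <;> linarith
  refine isIntersectionOfWeighted_two_iff.2 ⟨_, _,
    isWeighted_le_sum (hpos _ _ (by linarith) (by norm_num)) (by linarith),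
    isWeighted_le_sum (hpos _ _ (by norm_num) (by linarith)) (by linarith),
    pairOrCardGame_iff_boostedWeight hab hk⟩

end PairOrCardGame

theorem hexists25_dim_two_general {α : Type*} [Fintype α] [DecidableEq α]
    (P₁ P₂ : Finset α) (hdisj : Disjoint P₁ P₂)
    (h₁ : P₁.card = 2) (h₂ : P₂.card = 5)
    (W : Finset α → Prop)
    (hW : ∀ X : Finset α, W X ↔ 2 ≤ (X ∩ P₁).card ∨ 5 ≤ X.card) :
    ¬ IsWeighted W ∧
    (∃ V₁ V₂ : Finset α → Prop, IsWeighted V₁ ∧ IsWeighted V₂ ∧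
      ∀ X : Finset α, W X ↔ V₁ X ∧ V₂ X) ∧
    sInf {n : ℕ | ∃ V : Fin n → Finset α → Prop,
      (∀ i, IsWeighted (V i)) ∧ ∀ X : Finset α, W X ↔ ∀ i, V i X} = 2 := by
  obtain ⟨a, b, hab, rfl⟩ := card_eq_two.1 h₁
  obtain rfl : W = pairOrCardGame a b 5 :=
    funext fun X => propext ((hW X).trans (pairOrCardGame_iff_card_inter hab).symm)
  have hnot := not_isWeighted_pairOrCardGame hab (disjoint_left.1 hdisj (by simp))
    (disjoint_left.1 hdisj (by simp)) h₂ (by norm_num)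
  have htwo := isIntersectionOfWeighted_two_pairOrCardGame (k := 5) hab (by norm_num)
  exact ⟨hnot, isIntersectionOfWeighted_two_iff.1 htwo,
    sInf_isIntersectionOfWeighted_eq_two (by simp [pairOrCardGame]) hnot htwo⟩

/-- The disjunctive hierarchical game `H_∃(P,(2,5))` with `|P₁| = 2`,
`|P₂| = 5` (winning: at least 2 players of `P₁`, or at least 5 players in
total) is not weighted, is the intersection of two weighted games, and hence
has dimension `2`. -/
theorem hexists25_dim_two {α : Type*} [Fintype α] [DecidableEq α]
    (P₁ P₂ : Finset α) (hdisj : Disjoint P₁ P₂) (hcover : P₁ ∪ P₂ = Finset.univ)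
    (h₁ : P₁.card = 2) (h₂ : P₂.card = 5)
    (W : Finset α → Prop)
    (hW : ∀ X : Finset α, W X ↔ 2 ≤ (X ∩ P₁).card ∨ 5 ≤ X.card) :
    ¬ IsWeighted W ∧
    (∃ V₁ V₂ : Finset α → Prop, IsWeighted V₁ ∧ IsWeighted V₂ ∧
      ∀ X : Finset α, W X ↔ V₁ X ∧ V₂ X) ∧
    sInf {n : ℕ | ∃ V : Fin n → Finset α → Prop,
      (∀ i, IsWeighted (V i)) ∧ ∀ X : Finset α, W X ↔ ∀ i, V i X} = 2 :=
  hexists25_dim_two_general P₁ P₂ hdisj h₁ h₂ W hW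
end
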